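/- Let m ≥ 1, n = 2^m, let f ∈ ZMod n, and let J ⊆ {1,…,m}. Define H : ZMod n → ℂ by H(ξ) = ∏_{j ∈ J} (1 + e^{2πi·a(ξ)/2^j})/2, where a(ξ) ∈ ℤ is any integer lift of ξ − f (the value is well defined since 2^j divides n). Then there exists G : ZMod n → ℂ whose discrete Fourier transform equals H, whose support is contained in the set {−∑_{j ∈ J} ε_j·(n/2^j) : ε ∈ {0,1}^J} ⊆ ZMod n, and whose support has cardinality exactly 2^{|J|}. -/

import Mathlib

/-
Each factor `(1 + e((ξ - f) · n/2^j))/2`, with `e` the standard additive character of `ZMod n`,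
is an average of two characters evaluated at `ξ - f`. Expanding the product over `J` writes `H ξ`
as `2^{-|J|} ∑_ε e((ξ - f) · s_ε)` with `s_ε = ∑_{j ∈ J, ε j} n/2^j`, which is the Fourier
transform of `2^{-|J|}` times point masses at `-s_ε` with phases `e(-f · s_ε)`. The points are
pairwise distinct because `s_ε = ∑_{j ∈ J, ε j} 2^(m-j)` is a binary expansion with distinct
digits and value below `2^m`.
-/

open scoped BigOperators

/-- The one-dimensional discrete Fourier transform on `ZMod n`. -/
noncomputable def dft1 (n : ℕ) [NeZero n] (x : ZMod n → ℂ) : ZMod n → ℂ :=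
  fun f => ∑ t : ZMod n, x t *
    Complex.exp (-(2 * (Real.pi : ℂ) * Complex.I) * (((f * t : ZMod n)).val : ℂ) / (n : ℂ))

open Function ZMod

namespace AddChar

variable {ι A : Type*} [AddCommMonoid A]

lemma map_sum_eq_prod {M : Type*} [CommMonoid M] (ψ : AddChar A M) (s : Finset ι) (a : ι → A) :
    ψ (∑ i ∈ s, a i) = ∏ i ∈ s, ψ (a i) := by
  induction s using Finset.cons_induction with
  | empty => simp
  | cons i s hi ih => rw [Finset.sum_cons, Finset.prod_cons, map_add_eq_mul, ih]

variable [Fintype ι] [DecidableEq ι]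

lemma prod_one_add_eq_sum {M : Type*} [CommSemiring M] (ψ : AddChar A M) (a : ι → A) :
    ∏ i, (1 + ψ (a i)) = ∑ ε : ι → Bool, ψ (∑ i, if ε i then a i else 0) := by
  have h (i : ι) : 1 + ψ (a i) = ∑ b : Bool, ψ (if b then a i else 0) := by
    simp [add_comm]
  simp only [h, Fintype.prod_sum, map_sum_eq_prod]

lemma prod_one_add_div_two {R : Type*} [CommRing R] (ψ : AddChar R ℂ) (y : R) (c : ι → R) :
    ∏ i, (1 + ψ (y * c i)) / 2 =
      (2 ^ Fintype.card ι)⁻¹ * ∑ ε : ι → Bool, ψ (y * ∑ i, if ε i then c i else 0) := by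
  rw [Finset.prod_div_distrib, prod_one_add_eq_sum, Finset.prod_const, Finset.card_univ,
    div_eq_inv_mul]
  simp only [Finset.mul_sum, mul_ite, mul_zero]

end AddChar

lemma dft1_eq_dft (n : ℕ) [NeZero n] (x : ZMod n → ℂ) : dft1 n x = 𝓕 x := by
  ext ξ
  rw [dft1, dft_apply]
  refine Finset.sum_congr rfl fun t _ => ?_
  rw [smul_eq_mul, mul_comm, AddChar.map_neg_eq_inv, stdAddChar_apply, toCircle_apply,
    ← Complex.exp_neg, mul_comm t]
  ring_nf

lemma dft_sum_single {ι : Type*} [Fintype ι] {n : ℕ} [NeZero n] (p : ι → ZMod n) (w : ι → ℂ)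
    (k : ZMod n) :
    𝓕 (∑ i, Pi.single (p i) (w i)) k = ∑ i, stdAddChar (-(p i * k)) * w i := by
  simp only [Finset.sum_apply, dft_apply, Pi.single_apply, smul_eq_mul, Finset.mul_sum,
    mul_ite, mul_zero]
  rw [Finset.sum_comm]
  simp

lemma support_sum_single {ι α M : Type*} [Fintype ι] [DecidableEq α] [AddCommMonoid M]
    {p : ι → α} (hp : Injective p) {w : ι → M} (hw : ∀ i, w i ≠ 0) :
    support (∑ i, Pi.single (p i) (w i)) = Set.range p := by
  ext a
  simp only [mem_support, Finset.sum_apply, Pi.single_apply, Set.mem_range]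
  constructor
  · intro ha
    by_contra! h
    exact ha (Finset.sum_eq_zero fun i _ => if_neg (h i).symm)
  · rintro ⟨i, rfl⟩
    rw [Finset.sum_eq_single i (fun j _ hji => if_neg (hp.ne hji.symm)) (by simp), if_pos rfl]
    exact hw i

lemma ZMod.stdAddChar_mul_natCast {n d q : ℕ} [NeZero n] (hdq : d * q = n) (x : ZMod n) :
    stdAddChar (x * (q : ZMod n)) = Complex.exp (2 * Real.pi * Complex.I * x.val / d) := by
  have hdq' : (d : ℂ) * q ≠ 0 := by exact_mod_cast hdq ▸ NeZero.ne n
  rw [show x * (q : ZMod n) = ((x.val * q : ℕ) : ZMod n) by simp, stdAddChar_apply,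
    toCircle_natCast, ← Nat.cast_inj (R := ℂ).mpr hdq]
  push_cast
  field_simp [left_ne_zero_of_mul hdq', right_ne_zero_of_mul hdq']

section BinaryExpansion

variable {ι : Type*} [Fintype ι] {k : ι → ℕ}

lemma sum_ite_two_pow_eq (hk : Injective k) (ε : ι → Bool) :
    ∑ i, (if ε i then 2 ^ k i else 0) = ∑ i ∈ (Finset.univ.filter (ε ·)).map ⟨k, hk⟩, 2 ^ i := by
  rw [Finset.sum_map, Finset.sum_filter]
  rfl

lemma sum_ite_two_pow_injective (hk : Injective k) :
    Injective fun ε : ι → Bool => ∑ i, if ε i then 2 ^ k i else 0 := by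
  intro ε ε' h
  simp only [sum_ite_two_pow_eq hk] at h
  have := Finset.map_injective _ (Finset.geomSum_injective le_rfl h)
  funext i
  simpa using congrArg (i ∈ ·) this

lemma sum_ite_two_pow_lt (hk : Injective k) {m : ℕ} (hkm : ∀ i, k i < m) (ε : ι → Bool) :
    ∑ i, (if ε i then 2 ^ k i else 0) < 2 ^ m := by
  rw [sum_ite_two_pow_eq hk]
  exact Nat.geomSum_lt le_rfl (by simpa using fun i _ => hkm i)

lemma natCast_sum_ite_two_pow_injective (hk : Injective k) {m : ℕ} (hkm : ∀ i, k i < m) :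
    Injective fun ε : ι → Bool => ((∑ i, if ε i then 2 ^ k i else 0 : ℕ) : ZMod (2 ^ m)) := by
  intro ε ε' h
  apply sum_ite_two_pow_injective hk
  have := congrArg ZMod.val h
  dsimp only at this
  rwa [val_cast_of_lt (sum_ite_two_pow_lt hk hkm ε), val_cast_of_lt (sum_ite_two_pow_lt hk hkm ε')]
    at this

end BinaryExpansion

lemma injective_sum_ite_natCast_two_pow_div {m : ℕ} {J : Finset ℕ}
    (hJ : ∀ j ∈ J, 1 ≤ j ∧ j ≤ m) :
    Injective fun ε : J → Bool =>
      ∑ j, if ε j then ((2 ^ m / 2 ^ (j : ℕ) : ℕ) : ZMod (2 ^ m)) else 0 := by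
  have hk : Injective fun j : J => m - j := fun i j hij => by
    have := hJ i i.2; have := hJ j j.2; dsimp only at hij; ext; omega
  convert natCast_sum_ite_two_pow_injective hk (m := m) (fun j => by have := hJ j j.2; omega)
    using 2 with ε
  simp only [Nat.pow_div (hJ _ (Subtype.prop _)).2 two_pos]
  push_cast
  rfl

theorem stmt7 (m : ℕ) (n : ℕ) (hn : n = 2 ^ m) [NeZero n]
    (f : ZMod n) (J : Finset ℕ) (hJ : ∀ j ∈ J, 1 ≤ j ∧ j ≤ m)
    (H : ZMod n → ℂ)
    (hH : ∀ ξ : ZMod n, H ξ = ∏ j ∈ J,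
      (1 + Complex.exp (2 * (Real.pi : ℂ) * Complex.I * (((ξ - f : ZMod n)).val : ℂ)
        / ((2 : ℂ) ^ j))) / 2) :
    ∃ G : ZMod n → ℂ,
      dft1 n G = H ∧
      Function.support G ⊆
        Set.range (fun ε : {j // j ∈ J} → Bool =>
          -(∑ j : {j // j ∈ J},
              (if ε j then ((n / 2 ^ (j : ℕ) : ℕ) : ZMod n) else 0))) ∧
      (Function.support G).ncard = 2 ^ J.card := by
  classical
  subst hn
  set s : ({j // j ∈ J} → Bool) → ZMod (2 ^ m) := fun ε =>
    ∑ j : {j // j ∈ J}, if ε j then ((2 ^ m / 2 ^ (j : ℕ) : ℕ) : ZMod (2 ^ m)) else 0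
  have hs : Injective s := injective_sum_ite_natCast_two_pow_div hJ
  have hsupp := support_sum_single (neg_injective.comp hs)
    (w := fun ε => (2 ^ J.card : ℂ)⁻¹ * stdAddChar (-(f * s ε)))
    (fun ε => mul_ne_zero (by simp) (by simp [stdAddChar_apply]))
  refine ⟨_, ?_, hsupp.subset, ?_⟩
  · funext ξ
    rw [dft1_eq_dft, dft_sum_single, hH, ← Finset.prod_coe_sort]
    have hfactor (j : {j // j ∈ J}) :
        Complex.exp (2 * Real.pi * Complex.I * (ξ - f).val / 2 ^ (j : ℕ)) =
          stdAddChar ((ξ - f) * ((2 ^ m / 2 ^ (j : ℕ) : ℕ) : ZMod (2 ^ m))) := by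
      rw [stdAddChar_mul_natCast (Nat.mul_div_cancel' (pow_dvd_pow 2 (hJ j j.2).2))]
      push_cast
      rfl
    simp only [hfactor]
    rw [AddChar.prod_one_add_div_two, Fintype.card_coe, Finset.mul_sum]
    refine Finset.sum_congr rfl fun ε _ => ?_
    change _ = _ * stdAddChar ((ξ - f) * s ε)
    rw [mul_left_comm, ← AddChar.map_add_eq_mul, comp_apply]
    ring_nf
  · rw [hsupp, Set.ncard_range_of_injective (neg_injective.comp hs)]
    simp
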